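/- Let d ≥ 2, ε ∈ (0,1], A a symmetric d×d real matrix with tr A > 0 satisfying the Cordes condition |A|²/(tr A)² ≤ 1/(d-1+ε), and γ = tr(A)/|A|². Then for every d×d real matrix B, |γ (A:B)| ≥ |tr B| − √(1−ε)|B|. -/

import Mathlib

/-!
With `γ = tr A / |A|²` one computes `|γA - I|² = d - (tr A)² / |A|²`, and the Cordes condition says
exactly that this is at most `1 - ε`. Since `γ (A:B) - tr B = (γA - I):B`, Cauchy–Schwarz gives
`|γ (A:B) - tr B| ≤ √(1 - ε) |B|`, and the reverse triangle inequality finishes the proof.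
-/

open Finset Matrix

namespace Matrix

variable {n : Type*} [Fintype n]

theorem abs_sum_sum_mul_le_sqrt_mul_sqrt (M B : Matrix n n ℝ) :
    |∑ i, ∑ j, M i j * B i j| ≤
      √(∑ i, ∑ j, M i j ^ 2) * √(∑ i, ∑ j, B i j ^ 2) := by
  simp only [← Fintype.sum_prod_type']
  rw [← Real.sqrt_mul (by positivity)]
  exact Real.abs_le_sqrt (sum_mul_sq_le_sq_mul_sq _ _ _)

theorem sum_sum_sq_pos_of_trace_ne_zero {A : Matrix n n ℝ} (hA : A.trace ≠ 0) :
    0 < ∑ i, ∑ j, A i j ^ 2 := by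
  obtain ⟨i, hi⟩ : ∃ i, A i i ≠ 0 := by
    by_contra! h
    exact hA (by simp [Matrix.trace, h])
  calc 0 < A i i ^ 2 := by positivity
    _ ≤ ∑ j, A i j ^ 2 := single_le_sum (fun j _ ↦ sq_nonneg (A i j)) (mem_univ i)
    _ ≤ ∑ i, ∑ j, A i j ^ 2 :=
      single_le_sum (fun i _ ↦ sum_nonneg fun j _ ↦ sq_nonneg (A i j)) (mem_univ i)

variable [DecidableEq n]

theorem sum_sum_smul_sub_one_mul (c : ℝ) (A B : Matrix n n ℝ) :
    ∑ i, ∑ j, (c • A - 1) i j * B i j = c * ∑ i, ∑ j, A i j * B i j - B.trace := by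
  simp [sub_mul, one_apply, mul_sum, Matrix.trace, mul_assoc]

theorem sum_sum_smul_sub_one_sq (c : ℝ) (A : Matrix n n ℝ) :
    ∑ i, ∑ j, (c • A - 1) i j ^ 2 =
      c ^ 2 * ∑ i, ∑ j, A i j ^ 2 - 2 * c * A.trace + Fintype.card n := by
  have hdiag : ∀ i j, (c • A - 1) i j ^ 2 =
      c ^ 2 * A i j ^ 2 - 2 * c * (if i = j then A i j else 0) + (if i = j then 1 else 0) := by
    intro i j
    by_cases h : i = j <;> simp [h] <;> ring
  simp only [hdiag, sum_add_distrib, sum_sub_distrib, ← mul_sum, sum_ite_eq, mem_univ, if_true,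
    sum_const, card_univ, nsmul_eq_mul, mul_one, Matrix.trace, diag_apply]

theorem sum_sum_trace_div_smul_sub_one_sq {A : Matrix n n ℝ} (hA : A.trace ≠ 0) :
    ∑ i, ∑ j, ((A.trace / ∑ i, ∑ j, A i j ^ 2) • A - 1) i j ^ 2 =
      Fintype.card n - A.trace ^ 2 / ∑ i, ∑ j, A i j ^ 2 := by
  have hS := (sum_sum_sq_pos_of_trace_ne_zero hA).ne'
  rw [sum_sum_smul_sub_one_sq]
  field_simp
  ring

theorem sum_sum_trace_div_smul_sub_one_sq_le {A : Matrix n n ℝ} {ε : ℝ} (hA : A.trace ≠ 0)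
    (hcordes : (∑ i, ∑ j, A i j ^ 2) / A.trace ^ 2 ≤ 1 / ((Fintype.card n : ℝ) - 1 + ε)) :
    ∑ i, ∑ j, ((A.trace / ∑ i, ∑ j, A i j ^ 2) • A - 1) i j ^ 2 ≤ 1 - ε := by
  have hS := sum_sum_sq_pos_of_trace_ne_zero hA
  have hcard : (Fintype.card n : ℝ) - 1 + ε ≤ A.trace ^ 2 / ∑ i, ∑ j, A i j ^ 2 := by
    rcases le_or_gt ((Fintype.card n : ℝ) - 1 + ε) 0 with hc | hc
    · exact hc.trans (by positivity)
    · rw [one_div, le_inv_comm₀ (by positivity) hc, inv_div] at hcordes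
      exact hcordes
  rw [sum_sum_trace_div_smul_sub_one_sq hA]
  linarith

theorem abs_trace_div_mul_sub_trace_le {A : Matrix n n ℝ} {ε : ℝ} (B : Matrix n n ℝ)
    (hA : A.trace ≠ 0)
    (hcordes : (∑ i, ∑ j, A i j ^ 2) / A.trace ^ 2 ≤ 1 / ((Fintype.card n : ℝ) - 1 + ε)) :
    |A.trace / (∑ i, ∑ j, A i j ^ 2) * (∑ i, ∑ j, A i j * B i j) - B.trace| ≤
      √(1 - ε) * √(∑ i, ∑ j, B i j ^ 2) := by
  rw [← sum_sum_smul_sub_one_mul]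
  exact (abs_sum_sum_mul_le_sqrt_mul_sqrt _ B).trans <| mul_le_mul_of_nonneg_right
    (Real.sqrt_le_sqrt (sum_sum_trace_div_smul_sub_one_sq_le hA hcordes)) (Real.sqrt_nonneg _)

end Matrix

theorem cordes_gamma_lower_estimate_general (d : ℕ) (ε : ℝ)
    (A : Matrix (Fin d) (Fin d) ℝ)
    (htr : 0 < Matrix.trace A)
    (hcordes : (∑ i, ∑ j, A i j ^ 2) / (Matrix.trace A) ^ 2 ≤ 1 / ((d : ℝ) - 1 + ε))
    (γ : ℝ) (hγ : γ = Matrix.trace A / (∑ i, ∑ j, A i j ^ 2))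
    (B : Matrix (Fin d) (Fin d) ℝ) :
    |γ * (∑ i, ∑ j, A i j * B i j)| ≥
      |Matrix.trace B| - Real.sqrt (1 - ε) * Real.sqrt (∑ i, ∑ j, B i j ^ 2) := by
  have key := abs_trace_div_mul_sub_trace_le B htr.ne' (by rwa [Fintype.card_fin])
  rw [← hγ, abs_sub_comm] at key
  linarith [abs_sub_abs_le_abs_sub B.trace (γ * ∑ i, ∑ j, A i j * B i j)]

theorem cordes_gamma_lower_estimate (d : ℕ) (hd : 2 ≤ d) (ε : ℝ) (hε0 : 0 < ε) (hε1 : ε ≤ 1)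
    (A : Matrix (Fin d) (Fin d) ℝ) (hsymm : A.IsSymm)
    (htr : 0 < Matrix.trace A)
    (hcordes : (∑ i, ∑ j, A i j ^ 2) / (Matrix.trace A) ^ 2 ≤ 1 / ((d : ℝ) - 1 + ε))
    (γ : ℝ) (hγ : γ = Matrix.trace A / (∑ i, ∑ j, A i j ^ 2))
    (B : Matrix (Fin d) (Fin d) ℝ) :
    |γ * (∑ i, ∑ j, A i j * B i j)| ≥
      |Matrix.trace B| - Real.sqrt (1 - ε) * Real.sqrt (∑ i, ∑ j, B i j ^ 2) :=
  cordes_gamma_lower_estimate_general d ε A htr hcordes γ hγ B
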